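/- Let A be the 4th-order 2-dimensional real tensor with all entries zero except A_{1112}=A_{1222}=1 and A_{2111}=A_{2122}=-1. Then A has no real H-eigenpair; that is, there is no real number λ and nonzero real vector u = (u₁,u₂) such that (u₁²+u₂²)u₂ = λ u₁³ and -(u₁²+u₂²)u₁ = λ u₂³. -/

import Mathlib

open Finset

/-- For a 4th-order 2-dimensional tensor `A`, `(A x³)_j = ∑ A_{j i₂ i₃ i₄} x_{i₂} x_{i₃} x_{i₄}`. -/
noncomputable def app3 (A : Fin 2 → Fin 2 → Fin 2 → Fin 2 → ℝ) (x : Fin 2 → ℝ) :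
    Fin 2 → ℝ :=
  fun j => ∑ a : Fin 2, ∑ b : Fin 2, ∑ c : Fin 2, A j a b c * x a * x b * x c

/-- The tensor with `A_{1112} = A_{1222} = 1`, `A_{2111} = A_{2122} = -1`, all other entries zero. -/
noncomputable def A0 : Fin 2 → Fin 2 → Fin 2 → Fin 2 → ℝ := fun i j k l =>
  if (i, j, k, l) = (0, 0, 0, 1) ∨ (i, j, k, l) = (0, 1, 1, 1) then 1
  else if (i, j, k, l) = (1, 0, 0, 0) ∨ (i, j, k, l) = (1, 0, 1, 1) then -1
  else 0

/-!
`A0 u³ = ‖u‖² (u₂, -u₁)` is orthogonal to `u`, while `⟪u, λ u^{[3]}⟫ = λ ∑ uᵢ⁴`.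
So an eigenpair has `λ = 0`, and then `‖u‖² u = 0` forces `u = 0`.
-/

lemma sum_even_pow_pos {ι : Type*} [Fintype ι] {n : ℕ} (hn : Even n) {u : ι → ℝ}
    (hu : u ≠ 0) : 0 < ∑ i, u i ^ n := by
  obtain ⟨i, hi⟩ := Function.ne_iff.mp hu
  exact sum_pos' (fun j _ => hn.pow_nonneg (u j)) ⟨i, mem_univ i, hn.pow_pos hi⟩

lemma app3_A0_zero (u : Fin 2 → ℝ) : app3 A0 u 0 = (∑ i, u i ^ 2) * u 1 := by
  simp only [app3, A0, Fin.isValue, Prod.mk.injEq, true_and, zero_ne_one, false_and, or_self, ↓reduceIte,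
    ite_mul, one_mul, zero_mul, Fin.sum_univ_two, and_false, and_true, zero_add, or_false, one_ne_zero, false_or,
    add_zero]
  ring

lemma app3_A0_one (u : Fin 2 → ℝ) : app3 A0 u 1 = -(∑ i, u i ^ 2) * u 0 := by
  simp only [app3, A0, Fin.isValue, Prod.mk.injEq, one_ne_zero, false_and, or_self, ↓reduceIte, true_and,
    ite_mul, neg_mul, one_mul, zero_mul, Fin.sum_univ_two, and_true, zero_ne_one, and_false, or_false, false_or,
    add_zero, zero_add, neg_add_rev]
  ring

lemma sum_mul_app3_A0_self (u : Fin 2 → ℝ) : ∑ j, u j * app3 A0 u j = 0 := by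
  rw [Fin.sum_univ_two, app3_A0_zero, app3_A0_one]
  ring

/-- The tensor `A0` has no real H-eigenpair: there is no real `λ` and nonzero real `u`
with `A u³ = λ u^{[3]}`. -/
theorem stmt1 :
    ¬ ∃ (lam : ℝ) (u : Fin 2 → ℝ),
        u ≠ 0 ∧ ∀ j, app3 A0 u j = lam * (u j) ^ 3 := by
  rintro ⟨lam, u, hu, h⟩
  have hlam : lam = 0 := by
    have hsum : lam * ∑ j, u j ^ 4 = 0 := by
      calc lam * ∑ j, u j ^ 4 = ∑ j, u j * (lam * u j ^ 3) := by
            rw [mul_sum]; exact sum_congr rfl fun j _ => by ring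
        _ = 0 := by simp only [← h, sum_mul_app3_A0_self]
    exact (mul_eq_zero.mp hsum).resolve_right (sum_even_pow_pos (by decide) hu).ne'
  have hnorm : ∑ i, u i ^ 2 ≠ 0 := (sum_even_pow_pos even_two hu).ne'
  have h0 : u 0 = 0 := by
    have he := h 1
    rw [app3_A0_one, hlam, zero_mul, neg_mul, neg_eq_zero] at he
    exact (mul_eq_zero.mp he).resolve_left hnorm
  have h1 : u 1 = 0 := by
    have he := h 0
    rw [app3_A0_zero, hlam, zero_mul] at he
    exact (mul_eq_zero.mp he).resolve_left hnorm
  exact hu (funext fun j => by fin_cases j <;> assumption)
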